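/- Let d ∈ ℕ and α ∈ ℝ^d, and define ψ_α(ξ) := √2 / (A₀(α) − A_j(α) ξ^j). Then at every ξ ∈ ℝ^d with A₀(α) − A_j(α) ξ^j ≠ 0, the function ψ_α satisfies the static self-similar equation −(δ^{jk} − ξ^jξ^k) ∂_j∂_k ψ_α(ξ) + 4 ξ^j ∂_j ψ_α(ξ) + 2 ψ_α(ξ) = ψ_α(ξ)³. -/

import Mathlib

noncomputable section

/-- `A₀(α) = cosh(α^d)···cosh(α¹)` -/
def A0 {d : ℕ} (α : Fin d → ℝ) : ℝ := ∏ k, Real.cosh (α k)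

/-- `A_j(α) = cosh(α^d)···cosh(α^{j+1}) sinh(α^j)` -/
def Ac {d : ℕ} (α : Fin d → ℝ) (j : Fin d) : ℝ :=
  (∏ k ∈ Finset.Ioi j, Real.cosh (α k)) * Real.sinh (α j)

/-- the partial derivative in the `i`-th coordinate direction -/
def pdR {d : ℕ} (i : Fin d) (f : EuclideanSpace ℝ (Fin d) → ℝ) :
    EuclideanSpace ℝ (Fin d) → ℝ :=
  fun x => fderiv ℝ f x (EuclideanSpace.single i 1)

/-- `ψ_α(ξ) = √2 / (A₀(α) − A_j(α)ξ^j)` -/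
def psiA {d : ℕ} (α : Fin d → ℝ) (ξ : EuclideanSpace ℝ (Fin d)) : ℝ :=
  Real.sqrt 2 / (A0 α - ∑ j, Ac α j * ξ j)


/-! With `F = A₀ − A_j ξ^j`, the function `ψ_α = √2 F⁻¹` is a power of an affine function, so
`∂_k ψ_α = √2 A_k F⁻²` and `∂_j ∂_k ψ_α = 2√2 A_j A_k F⁻³`. Writing `T = A_j ξ^j`, the equation
multiplied by `F³/√2` becomes `−2(Σ A_j² − T²) + 4TF + 2F² = 2`, and since `F = A₀ − T` its left
side is `2(A₀² − Σ A_j²)`. This equals `2` by the hyperbolic identity `A₀² − Σ A_j² = 1`, proved by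
induction on `d` from `cosh² − sinh² = 1`. -/

open Filter Topology

theorem A0_sq_sub_sum_Ac_sq {d : ℕ} (α : Fin d → ℝ) : A0 α ^ 2 - ∑ j, Ac α j ^ 2 = 1 := by
  induction d with
  | zero => simp [A0]
  | succ n ih =>
    have hA0 : A0 α = Real.cosh (α 0) * A0 (fun k => α k.succ) := Fin.prod_univ_succ _
    have hAc0 : Ac α 0 = A0 (fun k => α k.succ) * Real.sinh (α 0) := by
      rw [Ac, Fin.prod_Ioi_zero]; rfl
    have hAcs (j : Fin n) : Ac α j.succ = Ac (fun k => α k.succ) j := by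
      rw [Ac, Fin.prod_Ioi_succ]; rfl
    rw [Fin.sum_univ_succ, hA0, hAc0]
    simp only [hAcs]
    linear_combination A0 (fun k => α k.succ) ^ 2 * Real.cosh_sq_sub_sinh_sq (α 0) + ih _

section AffineReciprocal

variable {E : Type*} [NormedAddCommGroup E] [NormedSpace ℝ E] (ℓ : E →L[ℝ] ℝ) (b c : ℝ) (m : ℤ)

theorem hasFDerivAt_mul_zpow_sub {x : E} (hx : b - ℓ x ≠ 0) :
    HasFDerivAt (fun y => c * (b - ℓ y) ^ m) (-(c * m * (b - ℓ x) ^ (m - 1)) • ℓ) x := by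
  have h := (((hasDerivAt_zpow m _ (.inl hx)).comp_hasFDerivAt x
    ((hasFDerivAt_const b x).sub ℓ.hasFDerivAt)).const_mul c)
  refine h.congr_fderiv ?_
  ext v
  simp only [zero_sub, smul_neg, neg_apply, smul_apply, smul_eq_mul, neg_mul, neg_inj]
  ring

theorem fderiv_mul_zpow_sub_eventuallyEq {x : E} (hx : b - ℓ x ≠ 0) (v : E) :
    (fun y => fderiv ℝ (fun y => c * (b - ℓ y) ^ m) y v)
      =ᶠ[𝓝 x] fun y => -(c * m * ℓ v) * (b - ℓ y) ^ (m - 1) := by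
  have hne : ∀ᶠ y in 𝓝 x, b - ℓ y ≠ 0 :=
    (continuous_const.sub ℓ.continuous).continuousAt.eventually_ne hx
  filter_upwards [hne] with y hy
  rw [(hasFDerivAt_mul_zpow_sub ℓ b c m hy).fderiv]
  simp only [FunLike.coe_smul, Pi.smul_apply, smul_eq_mul]
  ring

end AffineReciprocal

theorem sum_sum_kronecker_sub_mul {d : ℕ} (a ξ : Fin d → ℝ) :
    ∑ j, ∑ k, ((if j = k then (1 : ℝ) else 0) - ξ j * ξ k) * (a j * a k)
      = ∑ j, a j ^ 2 - (∑ j, a j * ξ j) ^ 2 := by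
  simp only [sub_mul, Finset.sum_sub_distrib, ite_mul, one_mul, zero_mul, Finset.sum_ite_eq,
    Finset.mem_univ, if_true, sq, Finset.sum_mul_sum]
  congr 1
  refine Finset.sum_congr rfl fun j _ => Finset.sum_congr rfl fun k _ => by ring

section Psi

variable {d : ℕ} (α : Fin d → ℝ)

def acFunctional : EuclideanSpace ℝ (Fin d) →L[ℝ] ℝ := ∑ j, Ac α j • EuclideanSpace.proj j

theorem acFunctional_apply (ξ : EuclideanSpace ℝ (Fin d)) :
    acFunctional α ξ = ∑ j, Ac α j * ξ j := by
  simp [acFunctional]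

theorem acFunctional_single (k : Fin d) : acFunctional α (EuclideanSpace.single k 1) = Ac α k := by
  simp [acFunctional_apply]

theorem psiA_eq_mul_zpow : psiA α = fun ξ => √2 * (A0 α - acFunctional α ξ) ^ (-1 : ℤ) := by
  ext ξ
  rw [psiA, acFunctional_apply, zpow_neg_one, div_eq_mul_inv]

variable {α} {ξ : EuclideanSpace ℝ (Fin d)} (hξ : A0 α - acFunctional α ξ ≠ 0)
include hξ

theorem pdR_psiA_eventuallyEq (k : Fin d) :
    pdR k (psiA α) =ᶠ[𝓝 ξ] fun y => √2 * Ac α k * (A0 α - acFunctional α y) ^ (-2 : ℤ) := by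
  rw [psiA_eq_mul_zpow]
  refine (fderiv_mul_zpow_sub_eventuallyEq _ _ _ _ hξ _).trans (.of_eq ?_)
  ext y
  rw [acFunctional_single]
  norm_num

theorem pdR_psiA (k : Fin d) :
    pdR k (psiA α) ξ = √2 * (A0 α - acFunctional α ξ) ^ (-2 : ℤ) * Ac α k := by
  rw [(pdR_psiA_eventuallyEq hξ k).eq_of_nhds]
  ring

theorem pdR_pdR_psiA (j k : Fin d) :
    pdR j (pdR k (psiA α)) ξ
      = 2 * √2 * (A0 α - acFunctional α ξ) ^ (-3 : ℤ) * (Ac α j * Ac α k) := by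
  rw [pdR, (pdR_psiA_eventuallyEq hξ k).fderiv_eq,
    (hasFDerivAt_mul_zpow_sub _ _ _ _ hξ).fderiv]
  simp only [FunLike.coe_smul, Pi.smul_apply, smul_eq_mul, acFunctional_single]
  norm_num
  ring

end Psi

/-- `ψ_α` solves the static self-similar equation
`−(δ^{jk} − ξ^jξ^k)∂_j∂_k ψ_α + 4ξ^j∂_j ψ_α + 2ψ_α = ψ_α³` wherever its denominator is
nonzero. -/
theorem stmt_13 (d : ℕ) (α : Fin d → ℝ) (ξ : EuclideanSpace ℝ (Fin d))
    (h : A0 α - ∑ j, Ac α j * ξ j ≠ 0) :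
    -(∑ j, ∑ k, ((if j = k then (1 : ℝ) else 0) - ξ j * ξ k) * pdR j (pdR k (psiA α)) ξ) +
        4 * (∑ j, ξ j * pdR j (psiA α) ξ) + 2 * psiA α ξ =
      (psiA α ξ) ^ 3 := by
  have hξ : A0 α - acFunctional α ξ ≠ 0 := by rwa [acFunctional_apply]
  simp only [pdR_psiA hξ, pdR_pdR_psiA hξ, mul_left_comm _ (2 * √2 * _), mul_left_comm (ξ _),
    ← Finset.mul_sum, sum_sum_kronecker_sub_mul]
  have hT : ∑ j, ξ j * Ac α j = ∑ j, Ac α j * ξ j := by simp only [mul_comm]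
  have hS : ∑ j, Ac α j ^ 2 = A0 α ^ 2 - 1 := by linarith [A0_sq_sub_sum_Ac_sq α]
  rw [hT, hS, acFunctional_apply, psiA]
  generalize ∑ j, Ac α j * ξ j = T at h ⊢
  simp only [zpow_neg, zpow_ofNat]
  field_simp
  rw [Real.sq_sqrt zero_le_two]
  ring
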